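/- arXiv:2411.13170 — 3 statements merged into one kernel-verified Lean document; each statement's English description precedes it below -/
import Mathlib

section
/- Let $n$ be a squarefree positive integer with exactly $l$ distinct prime factors, $l \geq 1$. Then for every integer $j$ with $0 \leq j < l$, $\sum_{d \mid n} \mu(d) (\log d)^{j} = 0$. -/
open ArithmeticFunction Finset
open scoped ArithmeticFunction.Moebius

/-! Writing `x p = log p`, a divisor `d` of the squarefree `n` corresponds to a set `t` of primes of
`n`, with `μ d = (-1) ^ #t` and `log d = ∑ p ∈ t, x p`. The sum becomes an alternating sum over
subsets `t` of an `l`-element set of `(∑ p ∈ t, x p) ^ j`: an `l`-th finite difference of a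
polynomial of degree `j < l`, hence zero. -/

/-- Splitting off one element `a`, the sum becomes a combination of the same sums over the smaller
set with exponents `< j`, which vanish by induction. -/
theorem Finset.sum_powerset_neg_one_pow_card_mul_sum_pow {R α : Type*} [CommRing R]
    [DecidableEq α] (x : α → R) (s : Finset α) {j : ℕ} (hj : j < #s) :
    ∑ t ∈ s.powerset, (-1 : R) ^ #t * (∑ p ∈ t, x p) ^ j = 0 := by
  induction s using Finset.induction_on generalizing j with
  | empty => simp at hj
  | insert a s ha ih =>
    rw [card_insert_of_notMem ha] at hj
    have hinsert : ∀ t ∈ s.powerset, (-1 : R) ^ #(insert a t) * (∑ p ∈ insert a t, x p) ^ j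
        = -∑ k ∈ range (j + 1), x a ^ (j - k) * j.choose k * ((-1) ^ #t * (∑ p ∈ t, x p) ^ k) := by
      intro t ht
      have hat : a ∉ t := fun h => ha (mem_powerset.mp ht h)
      rw [card_insert_of_notMem hat, sum_insert hat, add_comm (x a), add_pow, mul_sum, ← sum_neg_distrib]
      exact sum_congr rfl fun k _ => by ring
    have hlower : ∀ k ∈ range j,
        ∑ t ∈ s.powerset, x a ^ (j - k) * j.choose k * ((-1 : R) ^ #t * (∑ p ∈ t, x p) ^ k) = 0 :=
      fun k hk => by rw [← mul_sum, ih (by simp at hk; omega), mul_zero]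
    rw [sum_powerset_insert ha, sum_congr rfl hinsert, sum_neg_distrib, sum_comm, sum_range_succ,
      sum_eq_zero hlower]
    simp

theorem Nat.sum_divisors_eq_sum_powerset_primeFactors {M : Type*} [AddCommMonoid M] {n : ℕ}
    (hn : Squarefree n) (f : ℕ → M) :
    ∑ d ∈ n.divisors, f d = ∑ t ∈ n.primeFactors.powerset, f (∏ p ∈ t, p) := by
  rw [← Nat.divisors_filter_squarefree_of_squarefree hn,
    Nat.sum_divisors_filter_squarefree hn.ne_zero, Nat.factors_eq]
  exact sum_congr rfl fun t _ => congrArg f t.prod_val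

theorem ArithmeticFunction.moebius_prod_primes {t : Finset ℕ} (ht : ∀ p ∈ t, p.Prime) :
    μ (∏ p ∈ t, p) = (-1) ^ #t := by
  rw [isMultiplicative_moebius.map_prod_of_prime t ht,
    prod_congr rfl fun p hp => moebius_apply_prime (ht p hp), prod_const]

theorem Real.log_prod_primes {t : Finset ℕ} (ht : ∀ p ∈ t, p.Prime) :
    Real.log ((∏ p ∈ t, p : ℕ) : ℝ) = ∑ p ∈ t, Real.log p := by
  push_cast
  exact Real.log_prod fun p hp => by exact_mod_cast (ht p hp).ne_zero

theorem stmt_7_general (n l : ℕ) (hsq : Squarefree n)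
    (hl : n.primeFactors.card = l) (j : ℕ) (hj : j < l) :
    ∑ d ∈ n.divisors, (moebius d : ℝ) * (Real.log d) ^ j = 0 := by
  subst hl
  have hterm : ∀ t ∈ n.primeFactors.powerset,
      (μ (∏ p ∈ t, p) : ℝ) * Real.log ((∏ p ∈ t, p : ℕ) : ℝ) ^ j
        = (-1) ^ #t * (∑ p ∈ t, Real.log p) ^ j := by
    intro t ht
    have htp : ∀ p ∈ t, p.Prime := fun p hp => Nat.prime_of_mem_primeFactors (mem_powerset.mp ht hp)
    rw [moebius_prod_primes htp, Real.log_prod_primes htp]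
    push_cast
    rfl
  rw [Nat.sum_divisors_eq_sum_powerset_primeFactors hsq, sum_congr rfl hterm]
  exact sum_powerset_neg_one_pow_card_mul_sum_pow _ _ hj

theorem stmt_7 (n l : ℕ) (hn : 0 < n) (hsq : Squarefree n)
    (hl : n.primeFactors.card = l) (hl1 : 1 ≤ l) (j : ℕ) (hj : j < l) :
    ∑ d ∈ n.divisors, (moebius d : ℝ) * (Real.log d) ^ j = 0 :=
  stmt_7_general n l hsq hl j hj
end

section
/- Let $n$ be a squarefree positive integer with exactly $l$ distinct prime factors, $l \geq 1$. Then $\sum_{d \mid n} \mu(d) (\log d)^{l} = (-1)^{l}\, l! \prod_{p \mid n} \log p$, where the product runs over the prime divisors of $n$. -/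
open ArithmeticFunction
open scoped ArithmeticFunction.Moebius

/-! Writing a squarefree divisor as the product of a set `S` of primes turns `μ d * (log d) ^ l`
into `(-1) ^ #S * (∑ p ∈ S, log p) ^ l`. The alternating sum over all subsets `S` of a set `P` of
`(∑ i ∈ S, x i) ^ k` is an iterated finite difference of `t ↦ t ^ k`, one difference per element of
`P`, each lowering the degree by one; so it vanishes for `k < #P` and is
`(-1) ^ #P * (#P)! * ∏ i ∈ P, x i` for `k = #P`; the induction on `P` expands
`(x a + ∑ i ∈ S, x i) ^ k` binomially. -/

open Finset

section AlternatingPowerSum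

variable {ι R : Type*} [DecidableEq ι] [CommRing R] (x : ι → R)

def alternatingPowerSum (P : Finset ι) (k : ℕ) : R :=
  ∑ S ∈ P.powerset, (-1) ^ #S * (∑ i ∈ S, x i) ^ k

lemma alternatingPowerSum_insert {a : ι} {P : Finset ι} (ha : a ∉ P) (k : ℕ) :
    alternatingPowerSum x (insert a P) k
      = -∑ j ∈ range k, alternatingPowerSum x P j * x a ^ (k - j) * k.choose j := by
  have binomial : ∀ S ∈ P.powerset, (-1) ^ #(insert a S) * (∑ i ∈ insert a S, x i) ^ k
      = -∑ j ∈ range (k + 1), (-1) ^ #S * (∑ i ∈ S, x i) ^ j * x a ^ (k - j) * k.choose j := by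
    intro S hS
    have haS : a ∉ S := fun h => ha (mem_powerset.mp hS h)
    rw [card_insert_of_notMem haS, sum_insert haS, add_comm (x a), add_pow, mul_sum,
      ← sum_neg_distrib]
    refine sum_congr rfl fun j _ => ?_
    ring
  unfold alternatingPowerSum
  rw [sum_powerset_insert ha, sum_congr rfl binomial, sum_neg_distrib, sum_comm, sum_range_succ]
  simp only [← sum_mul, Nat.sub_self, pow_zero, Nat.choose_self, Nat.cast_one, mul_one]
  ring

lemma alternatingPowerSum_of_le_card {P : Finset ι} {k : ℕ} (hk : k ≤ #P) :
    alternatingPowerSum x P k = if k = #P then (-1) ^ #P * k.factorial * ∏ i ∈ P, x i else 0 := by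
  induction P using Finset.induction_on generalizing k with
  | empty =>
    obtain rfl : k = 0 := by simpa using hk
    simp [alternatingPowerSum]
  | @insert a P ha ih =>
    rw [card_insert_of_notMem ha] at hk ⊢
    rw [alternatingPowerSum_insert x ha]
    by_cases hkP : k = #P + 1
    · subst hkP
      rw [sum_eq_single_of_mem #P (self_mem_range_succ _) fun j hj hjP => by
          rw [ih (by simpa [Nat.lt_succ_iff] using hj), if_neg hjP, zero_mul, zero_mul],
        ih le_rfl, if_pos rfl, if_pos rfl, prod_insert ha, Nat.add_sub_cancel_left,
        Nat.choose_succ_self_right, Nat.factorial_succ]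
      push_cast
      ring
    · rw [if_neg hkP, sum_eq_zero fun j hj => by
        rw [ih (by simp at hj; omega), if_neg (by simp at hj; omega), zero_mul, zero_mul], neg_zero]

end AlternatingPowerSum

lemma sum_divisors_moebius_mul_eq_sum_powerset {R : Type*} [CommRing R] {n : ℕ}
    (hn : Squarefree n) (f : ℕ → R) :
    ∑ d ∈ n.divisors, (μ d : R) * f d
      = ∑ S ∈ n.primeFactors.powerset, (-1) ^ #S * f (∏ p ∈ S, p) := by
  rw [← Nat.divisors_filter_squarefree_of_squarefree hn,
    Nat.sum_divisors_filter_squarefree hn.ne_zero, Nat.factors_eq, List.toFinset_coe,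
    Nat.toFinset_factors]
  refine sum_congr rfl fun S hS => ?_
  have hSn : S ⊆ n.primeFactors := mem_powerset.mp hS
  rw [prod_val]
  change (μ (∏ p ∈ S, p) : R) * f (∏ p ∈ S, p) = _
  rw [isMultiplicative_moebius.map_prod_of_subset_primeFactors n S hSn,
    prod_congr rfl fun p hp => moebius_apply_prime (Nat.prime_of_mem_primeFactors (hSn hp)),
    prod_const]
  push_cast
  rfl

theorem stmt_8_general (n l : ℕ) (hsq : Squarefree n)
    (hl : n.primeFactors.card = l) :
    ∑ d ∈ n.divisors, (μ d : ℝ) * (Real.log d) ^ l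
      = (-1) ^ l * (l.factorial : ℝ) * ∏ p ∈ n.primeFactors, Real.log p := by
  have log_prod : ∀ S ∈ n.primeFactors.powerset,
      Real.log ((∏ p ∈ S, p : ℕ) : ℝ) = ∑ p ∈ S, Real.log p := fun S hS => by
    rw [Nat.cast_prod, Real.log_prod fun p hp => Nat.cast_ne_zero.mpr
      (Nat.prime_of_mem_primeFactors (mem_powerset.mp hS hp)).ne_zero]
  rw [sum_divisors_moebius_mul_eq_sum_powerset hsq,
    sum_congr rfl fun S hS => by rw [log_prod S hS]]
  subst hl
  exact (alternatingPowerSum_of_le_card (fun p : ℕ => Real.log p) (P := n.primeFactors)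
    le_rfl).trans (if_pos rfl)

theorem stmt_8 (n l : ℕ) (hn : 0 < n) (hsq : Squarefree n)
    (hl : n.primeFactors.card = l) (hl1 : 1 ≤ l) :
    ∑ d ∈ n.divisors, (μ d : ℝ) * (Real.log d) ^ l
      = (-1) ^ l * (l.factorial : ℝ) * ∏ p ∈ n.primeFactors, Real.log p :=
  stmt_8_general n l hsq hl
end

section
/- Let $n$ be a squarefree positive integer with exactly $l$ distinct prime factors, and let $P(x) = \sum_{k=0}^{l} c_k x^k$ be a polynomial of degree at most $l$ with complex coefficients. Then $\sum_{d \mid n} \mu(d) P(\log d) = (-1)^{l}\, l!\, c_l \prod_{p \mid n} \log p$. -/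
/-! Put `E_d = exp (X log d) = ∑ₖ (log d)ᵏ Xᵏ / k!` in `ℂ⟦X⟧`. Since `d ↦ E_d` is multiplicative,
for squarefree `n` the Möbius sum `∑_{d ∣ n} μ(d) E_d` factors as `∏_{p ∣ n} (1 - E_p)`. Each
factor is `-X log p + O(X²)`, so the product is `(-1)ˡ Xˡ ∏ log p + O(Xˡ⁺¹)`, and comparing the
coefficients of `Xᵏ` for `k ≤ l` gives `∑_{d ∣ n} μ(d) (log d)ᵏ = 0` for `k < l` and
`(-1)ˡ l! ∏ log p` for `k = l`.
-/

open Finset PowerSeries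

theorem PowerSeries.coeff_prod_of_constantCoeff_eq_zero {ι R : Type*} [CommSemiring R]
    {s : Finset ι} {φ : ι → R⟦X⟧} (hφ : ∀ i ∈ s, constantCoeff (φ i) = 0) {k : ℕ}
    (hk : k ≤ #s) :
    coeff k (∏ i ∈ s, φ i) = if k = #s then ∏ i ∈ s, coeff 1 (φ i) else 0 := by
  have hprod : ∏ i ∈ s, φ i = X ^ #s * ∏ i ∈ s, mk fun p ↦ coeff (p + 1) (φ i) := by
    rw [← prod_const, ← prod_mul_distrib]
    refine prod_congr rfl fun i hi ↦ ?_
    conv_lhs => rw [eq_X_mul_shift_add_const (φ i), hφ i hi, map_zero, add_zero]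
  rw [hprod, coeff_X_pow_mul']
  split_ifs with h₁ h₂ h₂
  · rw [h₂, Nat.sub_self, coeff_zero_eq_constantCoeff_apply, map_prod]
    simp
  · omega
  · omega
  · rfl

open scoped ArithmeticFunction.Moebius

namespace ArithmeticFunction

variable {A : Type*} [CommRing A] [Algebra ℚ A]

/-- `exp (g(d) X)`, i.e. `d ^ X` when `g = log`. -/
noncomputable def expSeries (g : ℕ → A) : ArithmeticFunction A⟦X⟧ :=
  ⟨fun d ↦ if d = 0 then 0 else rescale (g d) (exp A), if_pos rfl⟩

theorem expSeries_apply {g : ℕ → A} {d : ℕ} (hd : d ≠ 0) :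
    expSeries g d = rescale (g d) (exp A) :=
  if_neg hd

theorem isMultiplicative_expSeries {g : ℕ → A}
    (hg : ∀ m n, m ≠ 0 → n ≠ 0 → m.Coprime n → g (m * n) = g m + g n) :
    (expSeries g).IsMultiplicative := by
  have hg1 : g 1 = 0 := by simpa using hg 1 1 one_ne_zero one_ne_zero (Nat.coprime_one_left 1)
  refine IsMultiplicative.iff_ne_zero.mpr ⟨?_, fun {m n} hm hn hmn ↦ ?_⟩
  · rw [expSeries_apply one_ne_zero, hg1, rescale_zero]
    simp
  · rw [expSeries_apply (mul_ne_zero hm hn), expSeries_apply hm, expSeries_apply hn,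
      hg m n hm hn hmn, exp_mul_exp_eq_exp_add]

theorem sum_moebius_mul_pow_of_additive (g : ℕ → A)
    (hg : ∀ m n, m ≠ 0 → n ≠ 0 → m.Coprime n → g (m * n) = g m + g n)
    {n : ℕ} (hn : Squarefree n) {k : ℕ} (hk : k ≤ #n.primeFactors) :
    ∑ d ∈ n.divisors, (μ d : A) * g d ^ k =
      if k = #n.primeFactors then (-1) ^ k * (k.factorial : A) * ∏ p ∈ n.primeFactors, g p
      else 0 := by
  have hgen := (isMultiplicative_expSeries hg).prodPrimeFactors_one_sub_of_squarefree _ hn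
  have hprod : ∏ p ∈ n.primeFactors, (1 - expSeries g p) =
      ∏ p ∈ n.primeFactors, (1 - rescale (g p) (exp A)) :=
    prod_congr rfl fun p hp ↦ by rw [expSeries_apply (Nat.pos_of_mem_primeFactors hp).ne']
  have hsum : coeff k (∑ d ∈ n.divisors, (μ d : A⟦X⟧) * expSeries g d) =
      algebraMap ℚ A (1 / k.factorial) * ∑ d ∈ n.divisors, (μ d : A) * g d ^ k := by
    rw [map_sum, mul_sum]
    refine sum_congr rfl fun d hd ↦ ?_
    rw [expSeries_apply (Nat.ne_of_gt (Nat.pos_of_mem_divisors hd)), ← map_intCast (C (R := A)),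
      coeff_C_mul, coeff_rescale, coeff_exp]
    ring
  have hconst : ∀ p ∈ n.primeFactors, constantCoeff (1 - rescale (g p) (exp A)) = 0 := by
    intro p _
    rw [← coeff_zero_eq_constantCoeff_apply, map_sub, coeff_rescale, coeff_exp]
    simp
  have hlinear : ∀ p, coeff 1 (1 - rescale (g p) (exp A)) = -g p := by
    intro p
    rw [map_sub, coeff_rescale, coeff_exp]
    simp
  have hfact : (k.factorial : A) * algebraMap ℚ A (1 / k.factorial) = 1 := by
    rw [← map_natCast (algebraMap ℚ A), ← map_mul, mul_one_div_cancel (by positivity), map_one]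
  have hcoeff := congrArg (coeff k) hgen
  rw [hprod, hsum, coeff_prod_of_constantCoeff_eq_zero hconst hk] at hcoeff
  calc ∑ d ∈ n.divisors, (μ d : A) * g d ^ k
      = k.factorial *
          (algebraMap ℚ A (1 / k.factorial) * ∑ d ∈ n.divisors, (μ d : A) * g d ^ k) := by
        rw [← mul_assoc, hfact, one_mul]
    _ = _ := by
        rw [← hcoeff]
        split_ifs with hks
        · rw [prod_congr rfl fun p _ ↦ hlinear p, prod_neg, hks]
          ring
        · exact mul_zero _

end ArithmeticFunction

open ArithmeticFunction

theorem stmt_9_general (n l : ℕ) (hsq : Squarefree n)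
    (hl : n.primeFactors.card = l) (c : ℕ → ℂ) :
    ∑ d ∈ n.divisors,
        (μ d : ℂ) * ∑ k ∈ Finset.range (l + 1), c k * (Real.log d : ℂ) ^ k
      = (-1) ^ l * (l.factorial : ℂ) * c l * ∏ p ∈ n.primeFactors, (Real.log p : ℂ) := by
  have hlog (m k : ℕ) (hm : m ≠ 0) (hk : k ≠ 0) (_ : m.Coprime k) :
      (Real.log (m * k : ℕ) : ℂ) = Real.log m + Real.log k := by
    rw [Nat.cast_mul, Real.log_mul (by exact_mod_cast hm) (by exact_mod_cast hk),
      Complex.ofReal_add]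
  calc _ = ∑ k ∈ range (l + 1), c k * ∑ d ∈ n.divisors, (μ d : ℂ) * (Real.log d : ℂ) ^ k := by
        simp_rw [mul_sum]
        rw [sum_comm]
        exact sum_congr rfl fun _ _ ↦ sum_congr rfl fun _ _ ↦ by ring
    _ = ∑ k ∈ range (l + 1),
          c k * if k = l then (-1) ^ k * (k.factorial : ℂ) * ∏ p ∈ n.primeFactors, (Real.log p : ℂ)
            else 0 := by
        refine sum_congr rfl fun k hk ↦ ?_
        rw [sum_moebius_mul_pow_of_additive _ hlog hsq (hl ▸ mem_range_succ_iff.mp hk), hl]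
    _ = _ := by
        simp only [mul_ite, mul_zero, sum_ite_eq', mem_range, Nat.lt_succ_self, if_true]
        ring

theorem stmt_9 (n l : ℕ) (hn : 0 < n) (hsq : Squarefree n)
    (hl : n.primeFactors.card = l) (c : ℕ → ℂ) :
    ∑ d ∈ n.divisors,
        (μ d : ℂ) * ∑ k ∈ Finset.range (l + 1), c k * (Real.log d : ℂ) ^ k
      = (-1) ^ l * (l.factorial : ℂ) * c l * ∏ p ∈ n.primeFactors, (Real.log p : ℂ) :=
  stmt_9_general n l hsq hl c
end
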